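/- arXiv:1407.1199 — 2 statements merged into one kernel-verified Lean document; each statement's English description precedes it below -/
import Mathlib

section
/- If the flow conservation equations hold for integer-valued x : E → ℕ on a finite directed graph with source s and sink t (net outflow 1 at s, net inflow 1 at t, conservation elsewhere), then there exists a directed walk from s to t using only edges e with x_e ≥ 1. -/
/-- if the flow conservation equations hold for an
integer-valued flow `x : E → ℕ` on a finite directed graph (net outflow `1`
at the source `s`, net inflow `1` at the sink `t`, conservation elsewhere),
then there is a directed walk from `s` to `t` using only edges with
`x e ≥ 1`. -/
theorem flow_walk_exists {V : Type} [Fintype V] [DecidableEq V]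
    (E : V → V → Prop) (s t : V) (hst : s ≠ t)
    (x : V → V → ℕ)
    (hsupp : ∀ u v, ¬ E u v → x u v = 0)
    (hs : (∑ w, x s w) = (∑ w, x w s) + 1)
    (ht : (∑ w, x w t) = (∑ w, x t w) + 1)
    (hcons : ∀ v : V, v ≠ s → v ≠ t → (∑ w, x v w) = (∑ w, x w v)) :
    Relation.ReflTransGen (fun u v => E u v ∧ 1 ≤ x u v) s t := by
  classical
  by_contra hns
  set P : V → Prop := fun v => Relation.ReflTransGen (fun u v => E u v ∧ 1 ≤ x u v) s v with hP
  set R : Finset V := Finset.univ.filter P with hRdef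
  have hmem : ∀ v, v ∈ R ↔ P v := by
    intro v; simp [hRdef]
  have hsR : s ∈ R := (hmem s).mpr Relation.ReflTransGen.refl
  have htR : t ∉ R := fun h => hns ((hmem t).mp h)
  -- edges leaving R carry zero flow
  have hzero : ∀ u ∈ R, ∀ w, w ∉ R → x u w = 0 := by
    intro u hu w hw
    by_contra h
    have hx : 1 ≤ x u w := Nat.one_le_iff_ne_zero.mpr h
    have hE : E u w := by
      by_contra hE; exact h (hsupp u w hE)
    exact hw ((hmem w).mpr (((hmem u).mp hu).tail ⟨hE, hx⟩))
  -- net outflow of R is 1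
  have key : ∑ v ∈ R, ∑ w, x v w = (∑ v ∈ R, ∑ w, x w v) + 1 := by
    rw [← Finset.add_sum_erase R _ hsR, ← Finset.add_sum_erase R _ hsR, hs]
    have : ∑ v ∈ R.erase s, ∑ w, x v w = ∑ v ∈ R.erase s, ∑ w, x w v := by
      refine Finset.sum_congr rfl (fun v hv => ?_)
      have hvs : v ≠ s := Finset.ne_of_mem_erase hv
      have hvt : v ≠ t := by
        intro h; exact htR (h ▸ Finset.mem_of_mem_erase hv)
      exact hcons v hvs hvt
    omega
  -- but flow cannot exit R
  have cut : ∑ v ∈ R, ∑ w, x v w ≤ ∑ v ∈ R, ∑ w, x w v := by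
    have h1 : ∑ v ∈ R, ∑ w, x v w
        = ∑ v ∈ R, ∑ w ∈ R, x v w + ∑ v ∈ R, ∑ w ∈ Rᶜ, x v w := by
      rw [← Finset.sum_add_distrib]
      exact Finset.sum_congr rfl (fun v _ => (Finset.sum_add_sum_compl R _).symm)
    have h0 : ∑ v ∈ R, ∑ w ∈ Rᶜ, x v w = 0 :=
      Finset.sum_eq_zero fun v hv =>
        Finset.sum_eq_zero fun w hw => hzero v hv w (Finset.mem_compl.mp hw)
    have hcomm : ∑ v ∈ R, ∑ w ∈ R, x v w = ∑ v ∈ R, ∑ w ∈ R, x w v :=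
      Finset.sum_comm
    have h2 : ∑ v ∈ R, ∑ w ∈ R, x w v ≤ ∑ v ∈ R, ∑ w, x w v :=
      Finset.sum_le_sum fun v _ =>
        Finset.sum_le_sum_of_subset (Finset.subset_univ R)
    omega
  omega
end

section
/- If the original policy statements have pairwise disjoint predicates whose union is all packets, and the refined policy also has pairwise disjoint predicates whose union is all packets, then every packet is matched by exactly one statement in each policy, and the pairwise-inclusion check of the previous form is both sound and complete for policy refinement. -/
/-- if both the original policy `(p i, A i)` and the refined
policy `(p' j, A' j)` have pairwise disjoint predicates covering all packets,
then every packet is matched by exactly one statement in each policy, and the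
pairwise inclusion check is both sound and complete for policy refinement. -/
theorem inclusion_check_sound_complete {Packet Loc I J : Type}
    [Fintype I] [Fintype J]
    (p : I → Set Packet) (A : I → Set (List Loc))
    (p' : J → Set Packet) (A' : J → Set (List Loc))
    (hdisj : ∀ i i', i ≠ i' → p i ∩ p i' = ∅)
    (hcover : (⋃ i, p i) = Set.univ)
    (hdisj' : ∀ j j', j ≠ j' → p' j ∩ p' j' = ∅)
    (hcover' : (⋃ j, p' j) = Set.univ) :
    (∀ pkt : Packet, ∃! i, pkt ∈ p i) ∧
    (∀ pkt : Packet, ∃! j, pkt ∈ p' j) ∧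
    ((∀ i j, (p i ∩ p' j).Nonempty → A' j ⊆ A i) ↔
      (∀ (pkt : Packet) (w : List Loc),
        (∃ j, pkt ∈ p' j ∧ w ∈ A' j) → ∃ i, pkt ∈ p i ∧ w ∈ A i)) := by
  have huniq : ∀ pkt : Packet, ∃! i, pkt ∈ p i := by
    intro pkt
    have : pkt ∈ ⋃ i, p i := hcover ▸ Set.mem_univ pkt
    obtain ⟨i, hi⟩ := Set.mem_iUnion.1 this
    refine ⟨i, hi, fun i' hi' => ?_⟩
    by_contra h
    exact absurd (hdisj i' i h ▸ ⟨hi', hi⟩ : pkt ∈ (∅ : Set Packet)) (by simp)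
  have huniq' : ∀ pkt : Packet, ∃! j, pkt ∈ p' j := by
    intro pkt
    have : pkt ∈ ⋃ j, p' j := hcover' ▸ Set.mem_univ pkt
    obtain ⟨j, hj⟩ := Set.mem_iUnion.1 this
    refine ⟨j, hj, fun j' hj' => ?_⟩
    by_contra h
    exact absurd (hdisj' j' j h ▸ ⟨hj', hj⟩ : pkt ∈ (∅ : Set Packet)) (by simp)
  refine ⟨huniq, huniq', ?_, ?_⟩
  · intro hchk pkt w ⟨j, hj, hw⟩
    obtain ⟨i, hi, -⟩ := huniq pkt
    exact ⟨i, hi, hchk i j ⟨pkt, hi, hj⟩ hw⟩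
  · intro href i j ⟨pkt, hi, hj⟩ w hw
    obtain ⟨i', hi', hw'⟩ := href pkt w ⟨j, hj, hw⟩
    obtain ⟨i₀, -, hu⟩ := huniq pkt
    rwa [← (hu i hi ▸ hu i' hi' : i' = i)]
end
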